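/- Let n be a natural number and for g = (g₁, …, gₙ) ∈ SU(2)ⁿ let φ_g : FreeGroup(Fin n) → SU(2) denote the unique group homomorphism sending the i-th generator to g_i. If g, h ∈ SU(2)ⁿ satisfy Tr(φ_g(w)) = Tr(φ_h(w)) for every word w ∈ FreeGroup(Fin n), then there exists u ∈ SU(2) such that h_i = u⁻¹ · g_i · u for all i. -/

import Mathlib

/-- `SU2` is the special unitary group SU(2): the group of 2×2 complex unitary
matrices with determinant 1, realized as a subgroup of the unitary group. -/
def SU2 : Subgroup (Matrix.unitaryGroup (Fin 2) ℂ) where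
  carrier := {A | (A : Matrix (Fin 2) (Fin 2) ℂ).det = 1}
  one_mem' := by simp
  mul_mem' := by
    intro a b ha hb
    simp only [Set.mem_setOf_eq] at *
    show ((a : Matrix (Fin 2) (Fin 2) ℂ) * (b : Matrix (Fin 2) (Fin 2) ℂ)).det = 1
    rw [Matrix.det_mul, ha, hb, one_mul]
  inv_mem' := by
    intro a ha
    simp only [Set.mem_setOf_eq] at *
    show ((a⁻¹ : Matrix.unitaryGroup (Fin 2) ℂ) : Matrix (Fin 2) (Fin 2) ℂ).det = 1
    rw [Matrix.UnitaryGroup.inv_val, Matrix.star_eq_conjTranspose, Matrix.det_conjTranspose, ha,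
      star_one]

/-- The underlying 2×2 complex matrix of an element of SU(2). -/
def SU2.toMatrix (g : SU2) : Matrix (Fin 2) (Fin 2) ℂ := g.val.val

/-- The trace of (the matrix of) an element of SU(2). -/
noncomputable def SU2.trace (g : SU2) : ℂ := Matrix.trace (SU2.toMatrix g)

/-
For a unitary representation `ρ`, `(ρ w)ᴴ = ρ w⁻¹`, so the Frobenius norm `tr (Aᴴ A)` of a
combination `A = ∑ c_w ρ w` is a combination of the traces `tr ρ (w⁻¹ w')`. Hence two tuples with
equal word traces satisfy the same linear relations among their words, and a `u` conjugating `g w`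
into `h w` for all words `w` of a set whose `g`-images span every `g i` conjugates all `g i` into
`h i`. Such a `u` and set exist. If every `g i` is scalar, take `u = 1` and the set `{1}`. If some
`g i` is not scalar and every `g j` commutes with it, take `{1, g i}`, which spans its commutant,
and use that elements of SU(2) with equal traces are conjugate. Otherwise some `g j` does not
commute with `g i`: then `1, g j, g i, g j g i` span all of `M₂(ℂ)`, and equal traces of `g j`,
`g i` and `g j g i` make the pairs `(g j, g i)` and `(h j, h i)` simultaneously conjugate.
-/

open Matrix

theorem LinearMap.apply_eq_of_ker_le_of_mem_span {R M N P : Type*} [Ring R] [AddCommGroup M]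
    [AddCommGroup N] [AddCommGroup P] [Module R M] [Module R N] [Module R P]
    (L : M →ₗ[R] N) (L' : M →ₗ[R] P) (f : N →ₗ[R] P) (hker : ker L ≤ ker L') {s : Set M}
    (hs : Set.EqOn L' (f ∘ₗ L) s) {x : M} (hx : L x ∈ Submodule.span R (L '' s)) :
    L' x = f (L x) := by
  rw [← Submodule.map_span] at hx
  obtain ⟨y, hy, hLy⟩ := hx
  have hxy : x - y ∈ ker L' := hker (by simp [hLy])
  rw [mem_ker, map_sub, sub_eq_zero] at hxy
  rw [hxy, ← hLy]
  exact LinearMap.eqOn_span hs hy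

section UnitaryRepresentation
variable {G : Type*} [Group G] {m : Type*} [Fintype m] [DecidableEq m]

noncomputable def repLinearCombination (ρ : G →* unitaryGroup m ℂ) :
    (G →₀ ℂ) →ₗ[ℂ] Matrix m m ℂ :=
  Finsupp.linearCombination ℂ fun g => (ρ g : Matrix m m ℂ)

lemma trace_conjTranspose_mul_repLinearCombination (ρ : G →* unitaryGroup m ℂ) (a : G →₀ ℂ) :
    trace ((repLinearCombination ρ a)ᴴ * repLinearCombination ρ a) =
      a.sum fun g c => a.sum fun g' c' => star c * c' * trace (ρ (g⁻¹ * g') : Matrix m m ℂ) := by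
  simp only [repLinearCombination, Finsupp.linearCombination_apply, Finsupp.sum,
    conjTranspose_sum, Finset.sum_mul_sum, trace_sum, conjTranspose_smul, smul_mul_smul_comm,
    trace_smul, map_mul, map_inv, Submonoid.coe_mul, UnitaryGroup.inv_val, star_eq_conjTranspose,
    smul_eq_mul]

open scoped ComplexOrder in
lemma ker_repLinearCombination_le_of_trace_eq (ρ σ : G →* unitaryGroup m ℂ)
    (htr : ∀ g, trace (ρ g : Matrix m m ℂ) = trace (σ g : Matrix m m ℂ)) :
    LinearMap.ker (repLinearCombination ρ) ≤ LinearMap.ker (repLinearCombination σ) := by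
  intro a ha
  rw [LinearMap.mem_ker] at ha ⊢
  rw [← trace_conjTranspose_mul_self_eq_zero_iff, trace_conjTranspose_mul_repLinearCombination]
  simp only [← htr, ← trace_conjTranspose_mul_repLinearCombination, ha, mul_zero, trace_zero]

end UnitaryRepresentation

local notation "M₂" => Matrix (Fin 2) (Fin 2) ℂ

namespace SU2

def cayleyKlein (a b : ℂ) : M₂ := !![a, b; -star b, star a]

lemma cayleyKlein_mul (a b c d : ℂ) :
    cayleyKlein a b * cayleyKlein c d = cayleyKlein (a * c - b * star d) (a * d + b * star c) := by
  ext i j; fin_cases i <;> fin_cases j <;> simp [cayleyKlein] <;> ring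

lemma conjTranspose_cayleyKlein (a b : ℂ) : (cayleyKlein a b)ᴴ = cayleyKlein (star a) (-b) := by
  ext i j; fin_cases i <;> fin_cases j <;> simp [cayleyKlein]

lemma trace_cayleyKlein (a b : ℂ) : Matrix.trace (cayleyKlein a b) = a + star a := by
  simp [cayleyKlein, trace_fin_two]

lemma det_cayleyKlein (a b : ℂ) : (cayleyKlein a b).det = a * star a + b * star b := by
  simp [cayleyKlein, det_fin_two]

lemma cayleyKlein_of_star_eq {l : ℂ} (hl : star l = l) : cayleyKlein l 0 = l • 1 := by
  ext i j; fin_cases i <;> fin_cases j <;> simp [cayleyKlein, hl]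

lemma cayleyKlein_one_zero : cayleyKlein 1 0 = 1 := by
  rw [cayleyKlein_of_star_eq (star_one ℂ), one_smul]

lemma cayleyKlein_mem_unitaryGroup {a b : ℂ} (h : a * star a + b * star b = 1) :
    cayleyKlein a b ∈ unitaryGroup (Fin 2) ℂ := by
  rw [mem_unitaryGroup_iff, star_eq_conjTranspose, conjTranspose_cayleyKlein, cayleyKlein_mul,
    star_neg, star_star, ← cayleyKlein_one_zero]
  congr 1
  · linear_combination h
  · ring

def ofCayleyKlein (a b : ℂ) (h : a * star a + b * star b = 1) : SU2 :=
  ⟨⟨cayleyKlein a b, cayleyKlein_mem_unitaryGroup h⟩, (det_cayleyKlein a b).trans h⟩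

@[simp] lemma toMatrix_ofCayleyKlein (a b : ℂ) (h : a * star a + b * star b = 1) :
    toMatrix (ofCayleyKlein a b h) = cayleyKlein a b := rfl

lemma toMatrix_injective : Function.Injective toMatrix :=
  fun _ _ h => Subtype.ext (Subtype.ext h)

@[simp] lemma toMatrix_one : toMatrix 1 = 1 := rfl

@[simp] lemma toMatrix_mul (x y : SU2) : toMatrix (x * y) = toMatrix x * toMatrix y := rfl

@[simp] lemma toMatrix_inv (x : SU2) : toMatrix x⁻¹ = (toMatrix x)ᴴ :=
  UnitaryGroup.inv_val _

lemma det_toMatrix (x : SU2) : (toMatrix x).det = 1 := x.prop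

@[simp] lemma conjTranspose_mul_toMatrix (x : SU2) : (toMatrix x)ᴴ * toMatrix x = 1 :=
  mem_unitaryGroup_iff'.mp x.val.prop

@[simp] lemma toMatrix_mul_conjTranspose (x : SU2) : toMatrix x * (toMatrix x)ᴴ = 1 :=
  mem_unitaryGroup_iff.mp x.val.prop

lemma toMatrix_conj (u x : SU2) :
    toMatrix (u⁻¹ * x * u) = (toMatrix u)ᴴ * toMatrix x * toMatrix u := by
  simp

lemma trace_conj (u x : SU2) : SU2.trace (u⁻¹ * x * u) = SU2.trace x := by
  rw [SU2.trace, toMatrix_conj, trace_mul_cycle, toMatrix_mul_conjTranspose, Matrix.one_mul,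
    SU2.trace]

lemma eq_cayleyKlein {X : M₂} (hu : Xᴴ * X = 1) (hdet : X.det = 1) :
    X = cayleyKlein (X 0 0) (X 0 1) := by
  have hadj : X.adjugate = Xᴴ := calc
    X.adjugate = Xᴴ * X * X.adjugate := by rw [hu, Matrix.one_mul]
    _ = Xᴴ := by rw [Matrix.mul_assoc, mul_adjugate, hdet, one_smul, Matrix.mul_one]
  rw [adjugate_fin_two] at hadj
  have h11 : X 1 1 = star (X 0 0) := by simpa using congrFun (congrFun hadj 0) 0
  have h10 : X 1 0 = -star (X 0 1) := by
    simpa [neg_eq_iff_eq_neg] using congrFun (congrFun hadj 1) 0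
  rw [eta_fin_two X, h11, h10]
  rfl

lemma exists_cayleyKlein (x : SU2) :
    ∃ a b : ℂ, toMatrix x = cayleyKlein a b ∧ a * star a + b * star b = 1 := by
  have hx := eq_cayleyKlein (conjTranspose_mul_toMatrix x) (det_toMatrix x)
  refine ⟨_, _, hx, ?_⟩
  rw [← det_cayleyKlein, ← hx, det_toMatrix]

lemma exists_unit_eigenvector {M : M₂} {l : ℂ} {v : Fin 2 → ℂ} (hv0 : v ≠ 0)
    (hv : M *ᵥ v = l • v) :
    ∃ c d : ℂ, c * star c + d * star d = 1 ∧ M *ᵥ ![c, d] = l • ![c, d] := by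
  set N := Complex.normSq (v 0) + Complex.normSq (v 1)
  have hN : 0 < N := by
    by_contra! hN
    refine hv0 (funext fun i => ?_)
    fin_cases i <;>
      simp only [Fin.zero_eta, Fin.mk_one, Pi.zero_apply, ← Complex.normSq_eq_zero] <;>
      linarith [Complex.normSq_nonneg (v 0), Complex.normSq_nonneg (v 1)]
  set r : ℂ := (((√N)⁻¹ : ℝ) : ℂ)
  have hr : r * star r * N = 1 := by
    rw [Complex.star_def, Complex.conj_ofReal, ← Complex.ofReal_mul, ← Complex.ofReal_mul, ← sq,
      inv_pow, Real.sq_sqrt hN.le, inv_mul_cancel₀ hN.ne', Complex.ofReal_one]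
  have hrv : ![r * v 0, r * v 1] = r • v := by
    ext i; fin_cases i <;> rfl
  refine ⟨r * v 0, r * v 1, ?_, ?_⟩
  · simp only [star_mul', Complex.star_def, ← hr, N, Complex.ofReal_add, ← Complex.mul_conj]
    ring
  · rw [hrv, mulVec_smul, hv, smul_comm]

lemma exists_conj_eq_cayleyKlein_of_root (x : SU2) {l : ℂ} (hl : l ^ 2 - SU2.trace x * l + 1 = 0) :
    ∃ u : SU2, toMatrix (u⁻¹ * x * u) = cayleyKlein l 0 := by
  have hdet : (toMatrix x - l • 1).det = 0 := by
    have h1 := det_toMatrix x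
    rw [SU2.trace, trace_fin_two] at hl
    rw [det_fin_two] at h1 ⊢
    simp only [Matrix.sub_apply, Matrix.smul_apply, one_apply_eq, one_apply_ne zero_ne_one,
      one_apply_ne one_ne_zero, smul_eq_mul, mul_one, mul_zero, sub_zero]
    linear_combination hl + h1
  obtain ⟨v, hv0, hv⟩ := exists_mulVec_eq_zero_iff.mpr hdet
  rw [sub_mulVec, smul_mulVec, one_mulVec, sub_eq_zero] at hv
  obtain ⟨c, d, hcd, heig⟩ := exists_unit_eigenvector hv0 hv
  -- the first column of `u` is the unit eigenvector `(c, d)`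
  set u := ofCayleyKlein c (-star d)
    (by rw [star_neg, star_star, neg_mul_neg, mul_comm (star d)]; exact hcd)
  have hcol : toMatrix u *ᵥ Pi.single 0 1 = ![c, d] := by
    ext i; fin_cases i <;> simp [u, cayleyKlein]
  refine ⟨u, ?_⟩
  obtain ⟨a, b, hab, -⟩ := exists_cayleyKlein (u⁻¹ * x * u)
  have hfix : toMatrix (u⁻¹ * x * u) *ᵥ Pi.single 0 1 = l • Pi.single 0 1 := by
    rw [toMatrix_conj, ← mulVec_mulVec, ← mulVec_mulVec, hcol, heig, mulVec_smul, ← hcol,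
      mulVec_mulVec, conjTranspose_mul_toMatrix, one_mulVec]
  rw [hab, mulVec_single_one] at hfix
  have ha : a = l := by simpa [cayleyKlein] using congrFun hfix 0
  have hb : b = 0 := by simpa [cayleyKlein] using congrFun hfix 1
  rw [hab, ha, hb]

lemma exists_sq_sub_mul_add_one_eq_zero (τ : ℂ) : ∃ l : ℂ, l ^ 2 - τ * l + 1 = 0 := by
  obtain ⟨s, hs⟩ := IsAlgClosed.exists_eq_mul_self (discrim 1 (-τ) 1)
  obtain ⟨l, hl⟩ := exists_quadratic_eq_zero one_ne_zero ⟨s, hs⟩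
  exact ⟨l, by linear_combination hl⟩

lemma exists_conj_eq_cayleyKlein (x : SU2) :
    ∃ (u : SU2) (l : ℂ), toMatrix (u⁻¹ * x * u) = cayleyKlein l 0 := by
  obtain ⟨l, hl⟩ := exists_sq_sub_mul_add_one_eq_zero (SU2.trace x)
  obtain ⟨u, hu⟩ := exists_conj_eq_cayleyKlein_of_root x hl
  exact ⟨u, l, hu⟩

lemma exists_conj_eq_of_trace_eq {x y : SU2} (h : SU2.trace x = SU2.trace y) :
    ∃ u : SU2, y = u⁻¹ * x * u := by
  obtain ⟨l, hl⟩ := exists_sq_sub_mul_add_one_eq_zero (SU2.trace x)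
  obtain ⟨u, hu⟩ := exists_conj_eq_cayleyKlein_of_root x hl
  obtain ⟨v, hv⟩ := exists_conj_eq_cayleyKlein_of_root y (h ▸ hl)
  have huv : u⁻¹ * x * u = v⁻¹ * y * v := toMatrix_injective (hu.trans hv.symm)
  refine ⟨u * v⁻¹, ?_⟩
  calc y = v * (v⁻¹ * y * v) * v⁻¹ := by group
    _ = (u * v⁻¹)⁻¹ * x * (u * v⁻¹) := by rw [← huv]; group

lemma exists_add_mul_eq_of_ne_star {l : ℂ} (hl : l ≠ star l) (p q : ℂ) :
    ∃ c d : ℂ, c + d * l = p ∧ c + d * star l = q := by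
  have h : star l - l ≠ 0 := sub_ne_zero.mpr hl.symm
  refine ⟨(p * star l - q * l) / (star l - l), (q - p) / (star l - l), ?_, ?_⟩ <;>
    field_simp <;> ring

lemma cayleyKlein_zero_mul_comm (a l : ℂ) :
    cayleyKlein a 0 * cayleyKlein l 0 = cayleyKlein l 0 * cayleyKlein a 0 := by
  simp only [cayleyKlein_mul, star_zero, mul_zero, zero_mul, sub_zero, add_zero, mul_comm a l]

lemma cayleyKlein_mem_span_of_commute {l s r : ℂ} (hl : l ≠ star l)
    (hc : cayleyKlein s r * cayleyKlein l 0 = cayleyKlein l 0 * cayleyKlein s r) :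
    cayleyKlein s r ∈ Submodule.span ℂ {1, cayleyKlein l 0} := by
  have hr : r = 0 := by
    rw [cayleyKlein_mul, cayleyKlein_mul] at hc
    have h : r * star l = l * r := by simpa [cayleyKlein] using congrFun (congrFun hc 0) 1
    have h' : r * (l - star l) = 0 := by linear_combination -h
    exact (mul_eq_zero.mp h').resolve_right (sub_ne_zero.mpr hl)
  obtain ⟨c, d, h₁, h₂⟩ := exists_add_mul_eq_of_ne_star hl s (star s)
  refine Submodule.mem_span_pair.mpr ⟨c, d, ?_⟩
  rw [Complex.star_def] at h₂
  ext i j; fin_cases i <;> fin_cases j <;> simp [cayleyKlein, hr, h₁, h₂]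

lemma cayleyKlein_mem_span_of_ne_zero {l a b : ℂ} (hl : l ≠ star l) (hb : b ≠ 0) (s r : ℂ) :
    cayleyKlein s r ∈ Submodule.span ℂ
      {1, cayleyKlein l 0, cayleyKlein a b, cayleyKlein l 0 * cayleyKlein a b} := by
  obtain ⟨c₂, c₃, h₂, h₃⟩ := exists_add_mul_eq_of_ne_star hl (r / b) (star r / star b)
  obtain ⟨c₀, c₁, h₀, h₁⟩ :=
    exists_add_mul_eq_of_ne_star hl (s - a * (r / b)) (star s - star a * (star r / star b))
  have hsum : cayleyKlein s r = c₀ • 1 + c₁ • cayleyKlein l 0 + c₂ • cayleyKlein a b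
      + c₃ • (cayleyKlein l 0 * cayleyKlein a b) := by
    have hr : r / b * b = r := div_mul_cancel₀ r hb
    have hr' : star r / star b * star b = star r := div_mul_cancel₀ _ (star_ne_zero.mpr hb)
    rw [cayleyKlein_mul]
    ext i j; fin_cases i <;> fin_cases j <;>
      simp only [cayleyKlein, one_fin_two, Matrix.add_apply, Matrix.smul_apply, of_apply, cons_val',
        cons_val_zero, cons_val_one, cons_val_fin_one, Fin.zero_eta, Fin.mk_one, Fin.isValue,
        smul_eq_mul, star_mul', star_zero, zero_mul, add_zero, sub_zero]
    · linear_combination -h₀ - a * h₂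
    · linear_combination -b * h₂ - hr
    · linear_combination star b * h₃ + hr'
    · linear_combination -h₁ - star a * h₃
  rw [hsum]
  refine add_mem (add_mem (add_mem ?_ ?_) ?_) ?_ <;>
    exact Submodule.smul_mem _ _ (Submodule.subset_span (by simp))

lemma exists_cayleyKlein_conj_eq {l a₁ b₁ a₂ b₂ : ℂ} (hl : l ≠ star l) (hb₁ : b₁ ≠ 0)
    (hn₁ : a₁ * star a₁ + b₁ * star b₁ = 1) (hn₂ : a₂ * star a₂ + b₂ * star b₂ = 1)
    (h₁ : a₁ + star a₁ = a₂ + star a₂) (h₂ : l * a₁ + star (l * a₁) = l * a₂ + star (l * a₂)) :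
    ∃ μ : ℂ, μ * star μ = 1 ∧
      cayleyKlein (star μ) 0 * cayleyKlein a₁ b₁ * cayleyKlein μ 0 = cayleyKlein a₂ b₂ := by
  -- the traces force `a₁ = a₂`, hence `|b₁| = |b₂|`; conjugating by `diag(μ, μ̄)` turns `b₁`
  -- into `μ̄² b₁`
  have ha : a₁ = a₂ := by
    have h : (l - star l) * (a₁ - a₂) = 0 := by
      simp only [star_mul'] at h₂
      linear_combination h₂ - star l * h₁
    exact sub_eq_zero.mp ((mul_eq_zero.mp h).resolve_left (sub_ne_zero.mpr hl))
  subst ha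
  have hw : b₂ / b₁ * star (b₂ / b₁) = 1 := by
    rw [star_div₀, div_mul_div_comm, div_eq_one_iff_eq (mul_ne_zero hb₁ (star_ne_zero.mpr hb₁))]
    linear_combination hn₂ - hn₁
  obtain ⟨μ, hμ⟩ := IsAlgClosed.exists_eq_mul_self (star (b₂ / b₁))
  have hμμ : star μ * star μ = b₂ / b₁ := by rw [← star_mul, ← hμ, star_star]
  have hμ₁ : μ * star μ = 1 := by
    have h : ((Complex.normSq μ) : ℂ) ^ 2 = 1 := by
      rw [← Complex.mul_conj, ← Complex.star_def]
      linear_combination -(star μ * star μ) * hμ + star (b₂ / b₁) * hμμ + hw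
    have h' : Complex.normSq μ ^ 2 = 1 := by exact_mod_cast h
    rw [Complex.star_def, Complex.mul_conj,
      (pow_eq_one_iff_of_nonneg (Complex.normSq_nonneg μ) two_ne_zero).mp h', Complex.ofReal_one]
  refine ⟨μ, hμ₁, ?_⟩
  rw [cayleyKlein_mul, cayleyKlein_mul, star_zero]
  congr 1
  · linear_combination a₁ * hμ₁
  · linear_combination b₁ * hμμ + div_mul_cancel₀ b₂ hb₁

lemma conj_mul_conj (u x y : SU2) : u⁻¹ * x * u * (u⁻¹ * y * u) = u⁻¹ * (x * y) * u := by
  group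

lemma toMatrix_conj_mem_span_iff (u z : SU2) (S : Set SU2) :
    toMatrix (u⁻¹ * z * u) ∈ Submodule.span ℂ (toMatrix '' ((fun s => u⁻¹ * s * u) '' S)) ↔
      toMatrix z ∈ Submodule.span ℂ (toMatrix '' S) := by
  set f := LinearMap.mulLeftRight ℂ ((toMatrix u)ᴴ, toMatrix u)
  have hf : ∀ s, toMatrix (u⁻¹ * s * u) = f (toMatrix s) := toMatrix_conj u
  have hinj : Function.Injective f := fun X Y h => by
    have h' := congr_arg (fun M => toMatrix u * M * (toMatrix u)ᴴ) h
    simp only [f, LinearMap.mulLeftRight_apply, ← Matrix.mul_assoc, toMatrix_mul_conjTranspose,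
      Matrix.one_mul] at h'
    simpa only [Matrix.mul_assoc, toMatrix_mul_conjTranspose, Matrix.mul_one] using h'
  rw [Set.image_image, hf, funext hf, ← Set.image_image f toMatrix]
  exact Submodule.apply_mem_span_image_iff_mem_span hinj

lemma commute_of_toMatrix_mem_span_one {x : SU2} (hx : toMatrix x ∈ Submodule.span ℂ {1})
    (y : SU2) : x * y = y * x := by
  obtain ⟨c, hc⟩ := Submodule.mem_span_singleton.mp hx
  exact toMatrix_injective (by simp [← hc])

lemma ne_star_of_toMatrix_not_mem_span_one {x u : SU2} {l : ℂ}
    (hx : toMatrix x ∉ Submodule.span ℂ {1}) (hu : toMatrix (u⁻¹ * x * u) = cayleyKlein l 0) :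
    l ≠ star l := by
  intro hl
  apply hx
  simpa using (toMatrix_conj_mem_span_iff u x {1}).mp (by
    simpa [hu, cayleyKlein_of_star_eq hl.symm] using
      Submodule.smul_mem _ l (Submodule.mem_span_singleton_self (1 : M₂)))

lemma ne_zero_of_not_commute {x y u : SU2} {l a b : ℂ} (hxy : x * y ≠ y * x)
    (hx : toMatrix (u⁻¹ * x * u) = cayleyKlein l 0)
    (hy : toMatrix (u⁻¹ * y * u) = cayleyKlein a b) :
    b ≠ 0 := by
  rintro rfl
  apply hxy
  have h : u⁻¹ * x * u * (u⁻¹ * y * u) = u⁻¹ * y * u * (u⁻¹ * x * u) :=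
    toMatrix_injective (by simp only [toMatrix_mul, hx, hy, cayleyKlein_zero_mul_comm])
  simpa only [conj_mul_conj, mul_left_inj, mul_right_inj] using h

lemma toMatrix_mem_span_of_commute {x z : SU2} (hx : toMatrix x ∉ Submodule.span ℂ {1})
    (hzx : z * x = x * z) : toMatrix z ∈ Submodule.span ℂ (toMatrix '' {1, x}) := by
  obtain ⟨u, l, hu⟩ := exists_conj_eq_cayleyKlein x
  obtain ⟨s, r, hz, -⟩ := exists_cayleyKlein (u⁻¹ * z * u)
  have hc : cayleyKlein s r * cayleyKlein l 0 = cayleyKlein l 0 * cayleyKlein s r := by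
    rw [← hz, ← hu, ← toMatrix_mul, ← toMatrix_mul, conj_mul_conj, conj_mul_conj, hzx]
  rw [← toMatrix_conj_mem_span_iff u]
  simpa [Set.image_insert_eq, hu, hz] using
    cayleyKlein_mem_span_of_commute (ne_star_of_toMatrix_not_mem_span_one hx hu) hc

lemma toMatrix_mem_span_of_not_commute {x y : SU2} (hxy : x * y ≠ y * x) (z : SU2) :
    toMatrix z ∈ Submodule.span ℂ (toMatrix '' {1, x, y, x * y}) := by
  obtain ⟨u, l, hu⟩ := exists_conj_eq_cayleyKlein x
  obtain ⟨a, b, hy, -⟩ := exists_cayleyKlein (u⁻¹ * y * u)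
  obtain ⟨s, r, hz, -⟩ := exists_cayleyKlein (u⁻¹ * z * u)
  have hl := ne_star_of_toMatrix_not_mem_span_one
    (fun h => hxy (commute_of_toMatrix_mem_span_one h y)) hu
  rw [← toMatrix_conj_mem_span_iff u]
  simpa [Set.image_insert_eq, ← conj_mul_conj u x y, hu, hy, hz] using
    cayleyKlein_mem_span_of_ne_zero hl (ne_zero_of_not_commute hxy hu hy) s r

lemma exists_conj_eq_of_trace_mul_eq {x y₁ y₂ : SU2} (hxy : x * y₁ ≠ y₁ * x)
    (h₁ : SU2.trace y₁ = SU2.trace y₂) (h₂ : SU2.trace (x * y₁) = SU2.trace (x * y₂)) :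
    ∃ v : SU2, x = v⁻¹ * x * v ∧ y₂ = v⁻¹ * y₁ * v := by
  obtain ⟨u, l, hu⟩ := exists_conj_eq_cayleyKlein x
  have hl := ne_star_of_toMatrix_not_mem_span_one
    (fun h => hxy (commute_of_toMatrix_mem_span_one h y₁)) hu
  have htr : ∀ {y a b}, toMatrix (u⁻¹ * y * u) = cayleyKlein a b →
      SU2.trace y = a + star a ∧ SU2.trace (x * y) = l * a + star (l * a) := fun hy => by
    rw [← trace_conj u, ← trace_conj u (x * _), ← conj_mul_conj, SU2.trace, SU2.trace,
      toMatrix_mul (u⁻¹ * x * u), hu, hy, cayleyKlein_mul, trace_cayleyKlein, trace_cayleyKlein]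
    simp
  obtain ⟨a₁, b₁, hy₁, hn₁⟩ := exists_cayleyKlein (u⁻¹ * y₁ * u)
  obtain ⟨a₂, b₂, hy₂, hn₂⟩ := exists_cayleyKlein (u⁻¹ * y₂ * u)
  obtain ⟨μ, hμ, hconj⟩ := exists_cayleyKlein_conj_eq hl (ne_zero_of_not_commute hxy hu hy₁) hn₁ hn₂
    (by rw [← (htr hy₁).1, ← (htr hy₂).1, h₁]) (by rw [← (htr hy₁).2, ← (htr hy₂).2, h₂])
  set w := ofCayleyKlein μ 0 (by simpa using hμ)
  have hwx : u⁻¹ * x * u * w = w * (u⁻¹ * x * u) :=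
    toMatrix_injective (by rw [toMatrix_mul _ w, toMatrix_mul w, hu, toMatrix_ofCayleyKlein,
      cayleyKlein_zero_mul_comm])
  have hwy : w⁻¹ * (u⁻¹ * y₁ * u) * w = u⁻¹ * y₂ * u :=
    toMatrix_injective (by rw [toMatrix_conj, hy₁, hy₂, toMatrix_ofCayleyKlein,
      conjTranspose_cayleyKlein, neg_zero, hconj])
  refine ⟨u * w * u⁻¹, ?_, ?_⟩
  · calc x = u * (w⁻¹ * (w * (u⁻¹ * x * u))) * u⁻¹ := by group
      _ = (u * w * u⁻¹)⁻¹ * x * (u * w * u⁻¹) := by rw [← hwx]; group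
  · calc y₂ = u * (u⁻¹ * y₂ * u) * u⁻¹ := by group
      _ = (u * w * u⁻¹)⁻¹ * y₁ * (u * w * u⁻¹) := by rw [← hwy]; group

lemma exists_conj_pair_of_trace_eq {x₁ y₁ x₂ y₂ : SU2} (hxy : x₁ * y₁ ≠ y₁ * x₁)
    (hx : SU2.trace x₁ = SU2.trace x₂) (hy : SU2.trace y₁ = SU2.trace y₂)
    (hxy' : SU2.trace (x₁ * y₁) = SU2.trace (x₂ * y₂)) :
    ∃ u : SU2, x₂ = u⁻¹ * x₁ * u ∧ y₂ = u⁻¹ * y₁ * u := by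
  obtain ⟨u, rfl⟩ := exists_conj_eq_of_trace_eq hx
  have htr : ∀ z, SU2.trace (u * z * u⁻¹) = SU2.trace z := fun z => by
    simpa using trace_conj u⁻¹ z
  obtain ⟨v, hv, hvy⟩ := exists_conj_eq_of_trace_mul_eq (y₂ := u * y₂ * u⁻¹) hxy
    (by rw [hy, htr])
    (by rw [hxy', ← htr, show x₁ * (u * y₂ * u⁻¹) = u * (u⁻¹ * x₁ * u * y₂) * u⁻¹ by group])
  refine ⟨v * u, ?_, ?_⟩
  · calc u⁻¹ * x₁ * u = u⁻¹ * (v⁻¹ * x₁ * v) * u := by rw [← hv]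
      _ = (v * u)⁻¹ * x₁ * (v * u) := by group
  · calc y₂ = u⁻¹ * (u * y₂ * u⁻¹) * u := by group
      _ = (v * u)⁻¹ * y₁ * (v * u) := by rw [hvy]; group

theorem apply_eq_conj_of_mem_span {G : Type*} [Group G] {ρ σ : G →* SU2}
    (htr : ∀ w, SU2.trace (ρ w) = SU2.trace (σ w)) {u : SU2} {W : Set G}
    (hW : ∀ w ∈ W, σ w = u⁻¹ * ρ w * u) {x : G}
    (hx : toMatrix (ρ x) ∈ Submodule.span ℂ (toMatrix '' (ρ '' W))) :
    σ x = u⁻¹ * ρ x * u := by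
  set L := repLinearCombination (SU2.subtype.comp ρ)
  set L' := repLinearCombination (SU2.subtype.comp σ)
  have hL : ∀ w, L (Finsupp.single w 1) = toMatrix (ρ w) := fun w => by
    simp [L, repLinearCombination, toMatrix]
  have hL' : ∀ w, L' (Finsupp.single w 1) = toMatrix (σ w) := fun w => by
    simp [L', repLinearCombination, toMatrix]
  apply toMatrix_injective
  rw [toMatrix_conj, ← hL, ← hL']
  refine LinearMap.apply_eq_of_ker_le_of_mem_span L L'
    (LinearMap.mulLeftRight ℂ ((toMatrix u)ᴴ, toMatrix u))
    (ker_repLinearCombination_le_of_trace_eq _ _ htr) (s := (Finsupp.single · 1) '' W) ?_ ?_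
  · rintro _ ⟨w, hw, rfl⟩
    simp [hL, hL', hW w hw]
  · rwa [Set.image_image, hL, funext hL, ← Set.image_image]

end SU2

/-- If two `n`-tuples of elements of SU(2) give the same traces for all words in the
free group on `n` generators, then they are simultaneously conjugate. -/
theorem su2_tuples_with_equal_word_traces_are_conjugate (n : ℕ) (g h : Fin n → SU2)
    (htr : ∀ w : FreeGroup (Fin n),
      SU2.trace (FreeGroup.lift g w) = SU2.trace (FreeGroup.lift h w)) :
    ∃ u : SU2, ∀ i : Fin n, h i = u⁻¹ * g i * u := by
  suffices ∃ (u : SU2) (W : Set (FreeGroup (Fin n))),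
      (∀ w ∈ W, FreeGroup.lift h w = u⁻¹ * FreeGroup.lift g w * u) ∧
      ∀ i, SU2.toMatrix (g i) ∈ Submodule.span ℂ (SU2.toMatrix '' (FreeGroup.lift g '' W)) by
    obtain ⟨u, W, hW, hspan⟩ := this
    refine ⟨u, fun i => ?_⟩
    simpa using SU2.apply_eq_conj_of_mem_span htr hW (x := FreeGroup.of i) (by simpa using hspan i)
  by_cases hscalar : ∀ i, SU2.toMatrix (g i) ∈ Submodule.span ℂ {1}
  · exact ⟨1, {1}, by simp, by simpa using hscalar⟩
  obtain ⟨i, hi⟩ := not_forall.mp hscalar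
  by_cases hcomm : ∀ j, g j * g i = g i * g j
  · obtain ⟨u, hu⟩ := SU2.exists_conj_eq_of_trace_eq (by simpa using htr (.of i))
    refine ⟨u, {1, .of i}, by simp [hu], fun j => ?_⟩
    simpa [Set.image_insert_eq] using SU2.toMatrix_mem_span_of_commute hi (hcomm j)
  · obtain ⟨j, hj⟩ := not_forall.mp hcomm
    obtain ⟨u, huj, hui⟩ := SU2.exists_conj_pair_of_trace_eq hj (by simpa using htr (.of j))
      (by simpa using htr (.of i)) (by simpa using htr (.of j * .of i))
    refine ⟨u, {1, .of j, .of i, .of j * .of i}, by simp [huj, hui, SU2.conj_mul_conj], fun k => ?_⟩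
    simpa [Set.image_insert_eq] using SU2.toMatrix_mem_span_of_not_commute hj (g k)
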